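/- Let s ∈ Λ_{m,λ}(d,v), i.e. s ∈ Λ_λ(d,v) and s is χ_m-semistable, and let i ∈ I. Then: (1) if λ_i ≠ 0, then b_i(s) is surjective and a_i(s) is injective; (2) if m_i > 0, then b_i(s) is surjective; (3) if m_i < 0, then a_i(s) is injective. -/

import Mathlib

open scoped BigOperators

noncomputable section

structure QuiverShape (I Hh : Type) : Type where
  src : Hh → I
  tgt : Hh → I
  noloop : ∀ h, src h ≠ tgt h
  rev : Hh → Hh
  rev_ne : ∀ h, rev h ≠ h
  rev_rev : ∀ h, rev (rev h) = h
  src_rev : ∀ h, src (rev h) = tgt h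
  tgt_rev : ∀ h, tgt (rev h) = src h
  eps : Hh → ℂ
  eps_pm : ∀ h, eps h = 1 ∨ eps h = -1
  eps_rev : ∀ h, eps (rev h) = - eps h

namespace QuiverShape

variable {I Hh : Type}

/-- The representation space `S(d,v)`: a triple `(B, γ, δ)`. -/
abbrev Rep (Q : QuiverShape I Hh) (d v : I → ℕ) : Type :=
  ((h : Hh) → Matrix (Fin (v (Q.tgt h))) (Fin (v (Q.src h))) ℂ)
  × ((i : I) → Matrix (Fin (v i)) (Fin (d i)) ℂ)
  × ((i : I) → Matrix (Fin (d i)) (Fin (v i)) ℂ)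

/-- The group `G_v = ∏ᵢ GL(Vᵢ)`. -/
abbrev GV (v : I → ℕ) : Type := (i : I) → (Matrix (Fin (v i)) (Fin (v i)) ℂ)ˣ

/-- The action of `G_v` on `S(d,v)`. -/
def act (Q : QuiverShape I Hh) {d v : I → ℕ} (g : GV v) (s : Q.Rep d v) : Q.Rep d v :=
  ⟨fun h => ((g (Q.tgt h) : Matrix (Fin (v (Q.tgt h))) (Fin (v (Q.tgt h))) ℂ) * s.1 h) * (((g (Q.src h))⁻¹ : (Matrix (Fin (v (Q.src h))) (Fin (v (Q.src h))) ℂ)ˣ) : Matrix (Fin (v (Q.src h))) (Fin (v (Q.src h))) ℂ),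
   fun i => (g i : Matrix _ _ ℂ) * s.2.1 i,
   fun i => s.2.2 i * (((g i)⁻¹ : (Matrix _ _ ℂ)ˣ) : Matrix _ _ ℂ)⟩

/-- `B_{h̄}`, pulled back to a matrix `V_{h₁} → V_{h₀}` via the identities
`(h̄)₀ = h₁`, `(h̄)₁ = h₀`. -/
def Bbar (Q : QuiverShape I Hh) {d v : I → ℕ} (s : Q.Rep d v) (h : Hh) :
    Matrix (Fin (v (Q.src h))) (Fin (v (Q.tgt h))) ℂ :=
  Matrix.reindex (finCongr (congrArg v (Q.tgt_rev h))) (finCongr (congrArg v (Q.src_rev h)))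
    (s.1 (Q.rev h))

/-- The `i`-th component of the moment map:
`μᵢ(s) = ∑_{h : h₁ = i} ε(h) B_h B_{h̄} + γᵢ δᵢ`. -/
def mu (Q : QuiverShape I Hh) [Fintype Hh] [DecidableEq I] {d v : I → ℕ}
    (s : Q.Rep d v) (i : I) : Matrix (Fin (v i)) (Fin (v i)) ℂ :=
  (∑ h : {h : Hh // Q.tgt h = i},
      Q.eps h.1 • (Matrix.reindex (finCongr (congrArg v h.2)) (finCongr (congrArg v h.2))
        (s.1 h.1 * Q.Bbar s h.1)))
  + s.2.1 i * s.2.2 i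

/-- `Λ_λ(d,v) = μ⁻¹(λ)`. -/
def lamSet (Q : QuiverShape I Hh) [Fintype Hh] [DecidableEq I] (lam : I → ℂ) (d v : I → ℕ) :
    Set (Q.Rep d v) :=
  {s | ∀ i, Q.mu s i = lam i • (1 : Matrix (Fin (v i)) (Fin (v i)) ℂ)}

/-- Index type for the coordinates (matrix entries) of `S(d,v)`. -/
abbrev Coord (Q : QuiverShape I Hh) (d v : I → ℕ) : Type :=
  ((h : Hh) × (Fin (v (Q.tgt h)) × Fin (v (Q.src h))))
  ⊕ (((i : I) × (Fin (v i) × Fin (d i)))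
  ⊕ ((i : I) × (Fin (d i) × Fin (v i))))

/-- The coordinates of a point of `S(d,v)`. -/
def coords (Q : QuiverShape I Hh) {d v : I → ℕ} (s : Q.Rep d v) : Q.Coord d v → ℂ
  | Sum.inl ⟨h, rc⟩ => s.1 h rc.1 rc.2
  | Sum.inr (Sum.inl ⟨i, rc⟩) => s.2.1 i rc.1 rc.2
  | Sum.inr (Sum.inr ⟨i, rc⟩) => s.2.2 i rc.1 rc.2

/-- A function `S(d,v) → ℂ` is polynomial if it is given by a polynomial in the
matrix entries. -/
def IsPolyFun (Q : QuiverShape I Hh) {d v : I → ℕ} (f : Q.Rep d v → ℂ) : Prop :=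
  ∃ P : MvPolynomial (Q.Coord d v) ℂ, ∀ s, f s = MvPolynomial.eval (Q.coords s) P

/-- The character `χ_m(g) = ∏ᵢ det(gᵢ)^{mᵢ}`. -/
def chi [Fintype I] {v : I → ℕ} (m : I → ℤ) (g : GV v) : ℂ :=
  ∏ i, ((g i : Matrix (Fin (v i)) (Fin (v i)) ℂ).det) ^ (m i)

/-- `χ_m`-semistability. -/
def Semistable (Q : QuiverShape I Hh) [Fintype I] {d v : I → ℕ} (m : I → ℤ)
    (s : Q.Rep d v) : Prop :=
  ∃ n : ℕ, 0 < n ∧ ∃ f : Q.Rep d v → ℂ, Q.IsPolyFun f ∧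
      (∀ (g : GV v) (t : Q.Rep d v), f (Q.act g t) = (chi m g) ^ n * f t) ∧ f s ≠ 0

/-- `a_{ij}` = number of arrows from `i` to `j`. -/
def aCount (Q : QuiverShape I Hh) (i j : I) : ℕ :=
  Nat.card {h : Hh // Q.src h = i ∧ Q.tgt h = j}

/-- The generalized Cartan matrix `c_{ij} = 2δ_{ij} - a_{ij}`. -/
def cartan (Q : QuiverShape I Hh) [DecidableEq I] (i j : I) : ℤ :=
  2 * (if i = j then 1 else 0) - (Q.aCount i j : ℤ)

/-- `T_i = D_i ⊕ ⊕_{h : h₁ = i} V_{h₀}`. -/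
abbrev TSpace (Q : QuiverShape I Hh) (d v : I → ℕ) (i : I) : Type :=
  (Fin (d i) → ℂ) × ((h : {h : Hh // Q.tgt h = i}) → (Fin (v (Q.src h.1)) → ℂ))

/-- Transport between coordinate spaces of equal dimensions. -/
def vcast {m n : ℕ} (hmn : m = n) : (Fin m → ℂ) ≃ₗ[ℂ] (Fin n → ℂ) :=
  LinearEquiv.funCongrLeft ℂ ℂ (finCongr hmn.symm)

/-- `a_i(s) = (δ_i, (B_{h̄})_{h : h₁ = i}) : V_i → T_i`. -/
def aMap (Q : QuiverShape I Hh) [DecidableEq I] {d v : I → ℕ}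
    (s : Q.Rep d v) (i : I) : (Fin (v i) → ℂ) →ₗ[ℂ] Q.TSpace d v i :=
  LinearMap.prod (Matrix.mulVecLin (s.2.2 i))
    (LinearMap.pi fun h =>
      Matrix.mulVecLin (Q.Bbar s h.1) ∘ₗ (vcast (congrArg v h.2)).symm.toLinearMap)

/-- `b_i(s) = (γ_i, (ε(h) B_h)_{h : h₁ = i}) : T_i → V_i`. -/
def bMap (Q : QuiverShape I Hh) [Fintype Hh] [DecidableEq I] {d v : I → ℕ}
    (s : Q.Rep d v) (i : I) : Q.TSpace d v i →ₗ[ℂ] (Fin (v i) → ℂ) :=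
  (Matrix.mulVecLin (s.2.1 i)).comp (LinearMap.fst ℂ _ _) +
    ∑ h : {h : Hh // Q.tgt h = i},
      Q.eps h.1 •
        ((vcast (congrArg v h.2)).toLinearMap ∘ₗ Matrix.mulVecLin (s.1 h.1) ∘ₗ
          (LinearMap.proj h) ∘ₗ (LinearMap.snd ℂ _ _))

/-- The canonical identification `T_i(d,v') = T_i(d,v)` when `v'` agrees with `v`
away from `i` (and the graph has no loops). -/
def Tcast (Q : QuiverShape I Hh) {d v v' : I → ℕ} (i : I)
    (hv' : ∀ j, j ≠ i → v' j = v j) : Q.TSpace d v' i ≃ₗ[ℂ] Q.TSpace d v i :=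
  (LinearEquiv.refl ℂ (Fin (d i) → ℂ)).prodCongr
    (LinearEquiv.piCongrRight fun h =>
      vcast (hv' (Q.src h.1) (fun he => Q.noloop h.1 (he.trans h.2.symm))))

/-- Exactness of `0 → M₁ → M₂ → M₃ → 0`. -/
def ShortExact {M₁ M₂ M₃ : Type} [AddCommGroup M₁] [Module ℂ M₁] [AddCommGroup M₂]
    [Module ℂ M₂] [AddCommGroup M₃] [Module ℂ M₃]
    (f : M₁ →ₗ[ℂ] M₂) (g : M₂ →ₗ[ℂ] M₃) : Prop :=
  Function.Injective f ∧ Function.Surjective g ∧ LinearMap.range f = LinearMap.ker g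

/-- Conditions (1)–(5) defining `Z_i^λ(d,v)`. -/
def ZConds (Q : QuiverShape I Hh) [Fintype Hh] [DecidableEq I] {d v v' : I → ℕ} (i : I)
    (hv' : ∀ j, j ≠ i → v' j = v j) (lam : I → ℂ)
    (s : Q.Rep d v) (s' : Q.Rep d v') : Prop :=
  (∀ h (hs : Q.src h ≠ i) (ht : Q.tgt h ≠ i),
      s.1 h = Matrix.reindex (finCongr (hv' _ ht)) (finCongr (hv' _ hs)) (s'.1 h)) ∧
  (∀ j (hj : j ≠ i),
      s.2.1 j = Matrix.reindex (finCongr (hv' j hj)) (Equiv.refl _) (s'.2.1 j)) ∧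
  (∀ j (hj : j ≠ i),
      s.2.2 j = Matrix.reindex (Equiv.refl _) (finCongr (hv' j hj)) (s'.2.2 j)) ∧
  ShortExact ((Q.Tcast i hv').toLinearMap ∘ₗ Q.aMap s' i) (Q.bMap s i) ∧
  ((Q.Tcast i hv').toLinearMap ∘ₗ (Q.aMap s' i ∘ₗ Q.bMap s' i) ∘ₗ (Q.Tcast i hv').symm.toLinearMap
      = Q.aMap s i ∘ₗ Q.bMap s i - lam i • LinearMap.id)

/-- The variety `Z_i^λ(d,v)`: conditions (1)–(5) together with condition (6). -/
def ZRel (Q : QuiverShape I Hh) [Fintype Hh] [DecidableEq I] {d v v' : I → ℕ} (i : I)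
    (hv' : ∀ j, j ≠ i → v' j = v j) (lam lam' : I → ℂ)
    (s : Q.Rep d v) (s' : Q.Rep d v') : Prop :=
  Q.ZConds i hv' lam s s' ∧ s ∈ Q.lamSet lam d v ∧ s' ∈ Q.lamSet lam' d v'

end QuiverShape

end


/-!
Part (1) is immediate from `b_i a_i = μ_i = λ_i`. For (2), if `b_i` is not onto, pick a covector
`w` on `V_i` vanishing on the image of `b_i` and a vector `x` with `w x = 1`. The idempotent
`P = x wᵀ` at the vertex `i` kills `γ_i` and every `B_h` into `i` from the left, so the
one-parameter subgroup `g_u = 1 + (u⁻¹ - 1) P` moves `s` along an affine line `s + (u - 1) s₁`,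
while `χ_m(g_u) = u^{-m_i}`. A semi-invariant `f` of weight `χ_m^n` thus satisfies
`f (s + (u - 1) s₁) = u^{-n m_i} f s` for all `u ≠ 0`; the left side is a polynomial in `u`
and the right side has a pole at `0` unless `f s = 0`. Part (3) is the dual argument with a vector in the kernel of `a_i`.
-/

open Polynomial

theorem IsIdempotentElem.one_add_smul_mul_one_add_smul {K A : Type*} [CommRing K] [Ring A]
    [Algebra K A] {P : A} (hP : IsIdempotentElem P) (a b : K) :
    (1 + a • P) * (1 + b • P) = 1 + (a + b + a * b) • P := by
  simp only [mul_add, add_mul, mul_one, one_mul, smul_mul_smul_comm, hP.eq, add_smul]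
  abel

def IsIdempotentElem.scalingUnit {K A : Type*} [CommRing K] [Ring A] [Algebra K A] {P : A}
    (hP : IsIdempotentElem P) (u : Kˣ) : Aˣ where
  val := 1 + ((u : K) - 1) • P
  inv := 1 + ((↑u⁻¹ : K) - 1) • P
  val_inv := by
    rw [hP.one_add_smul_mul_one_add_smul, show (u : K) - 1 + (↑u⁻¹ - 1) + (u - 1) * (↑u⁻¹ - 1) = 0
      by linear_combination u.mul_inv, zero_smul, add_zero]
  inv_val := by
    rw [hP.one_add_smul_mul_one_add_smul, show (↑u⁻¹ : K) - 1 + (u - 1) + (↑u⁻¹ - 1) * (u - 1) = 0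
      by linear_combination u.inv_mul, zero_smul, add_zero]

theorem Polynomial.eq_zero_of_eval_eq_zpow_mul {K : Type*} [Field K] [Infinite K] {q : K[X]}
    {c : ℤ} (hc : c < 0) {a : K} (h : ∀ u : K, u ≠ 0 → q.eval u = u ^ c * a) : a = 0 := by
  obtain ⟨N, hN, rfl⟩ : ∃ N : ℕ, 0 < N ∧ c = -N := ⟨c.natAbs, by omega, by omega⟩
  have hXq : X ^ N * q = C a := by
    refine Polynomial.eq_of_infinite_eval_eq _ _ ((Set.finite_singleton 0).infinite_compl.mono ?_)
    intro u hu
    simp only [Set.mem_ofPred_eq, eval_mul, eval_pow, eval_X, eval_C, h u hu]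
    rw [zpow_neg, zpow_natCast, mul_inv_cancel_left₀ (pow_ne_zero N hu)]
  simpa [zero_pow hN.ne'] using (congrArg (eval 0) hXq).symm

section LinearAlgebra

variable {K M n : Type*} [Field K] [Fintype n] [DecidableEq n]

theorem Matrix.exists_dotProduct_eq_one {w : n → K} (hw : w ≠ 0) : ∃ x, w ⬝ᵥ x = 1 := by
  obtain ⟨j, hj⟩ := Function.ne_iff.1 hw
  exact ⟨(w j)⁻¹ • Pi.single j 1, by simpa [dotProduct_single] using inv_mul_cancel₀ hj⟩

theorem LinearMap.exists_ne_zero_dotProduct_eq_zero_of_not_surjective [AddCommGroup M]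
    [Module K M] {f : M →ₗ[K] n → K} (hf : ¬ Function.Surjective f) :
    ∃ w ≠ 0, ∀ y, w ⬝ᵥ f y = 0 := by
  obtain ⟨φ, hφ, hle⟩ := (LinearMap.range f).exists_le_ker_of_lt_top
    (lt_top_iff_ne_top.2 (mt LinearMap.range_eq_top.1 hf))
  refine ⟨(dotProductEquiv K n).symm φ, by simpa using hφ, fun y => ?_⟩
  have hy := hle ⟨y, rfl⟩
  rwa [LinearMap.mem_ker, ← (dotProductEquiv K n).apply_symm_apply φ] at hy

end LinearAlgebra

theorem Pi.single_apply_eq_comp_finCongr {I α : Type*} [DecidableEq I] [Zero α] {v : I → ℕ}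
    {i j : I} (hj : j = i) (x : Fin (v i) → α) :
    (Pi.single i x : (j : I) → Fin (v j) → α) j = x ∘ finCongr (congrArg v hj) := by
  subst hj
  simp

namespace QuiverShape

open Matrix

variable {I Hh : Type} {Q : QuiverShape I Hh} {d v : I → ℕ}

theorem eps_ne_zero (h : Hh) : Q.eps h ≠ 0 := by
  rcases Q.eps_pm h with he | he <;> simp [he]

theorem vcast_apply {m n : ℕ} (e : m = n) (z : Fin m → ℂ) : vcast e z = z ∘ (finCongr e).symm :=
  rfl

section Maps

variable [DecidableEq I] (s : Q.Rep d v) (i : I)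

theorem exists_vector_of_not_injective_aMap (ha : ¬ Function.Injective (Q.aMap s i)) :
    ∃ x ≠ 0, (∀ h, s.1 h *ᵥ (Pi.single i x : (j : I) → Fin (v j) → ℂ) (Q.src h) = 0) ∧
      ∀ j, s.2.2 j *ᵥ (Pi.single i x : (j : I) → Fin (v j) → ℂ) j = 0 := by
  obtain ⟨x, hx, hx0⟩ : ∃ x, Q.aMap s i x = 0 ∧ x ≠ 0 := by
    simpa [injective_iff_map_eq_zero] using ha
  refine ⟨x, hx0, fun h => ?_, fun j => ?_⟩
  · -- `aMap` sees the arrows out of `i` only through their reverses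
    obtain ⟨h, rfl⟩ : ∃ h', Q.rev h' = h := ⟨Q.rev h, Q.rev_rev h⟩
    by_cases hs : Q.src (Q.rev h) = i
    · have hB := congrFun (congrArg Prod.snd hx) ⟨h, (Q.src_rev h).symm.trans hs⟩
      simp only [aMap, LinearMap.prod_apply, Function.prod, LinearMap.pi_apply,
        LinearMap.coe_comp, Function.comp_apply, mulVecLin_apply, LinearEquiv.coe_coe, Bbar,
        reindex_apply, submatrix_mulVec_equiv] at hB
      rw [Pi.single_apply_eq_comp_finCongr hs]
      funext a
      have hBa := congrFun hB (finCongr (congrArg v (Q.tgt_rev h)) a)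
      simp only [Function.comp_apply, Equiv.symm_apply_apply] at hBa
      exact hBa
    · simp [Pi.single_eq_of_ne hs]
  · by_cases hj : j = i
    · subst hj
      rw [Pi.single_eq_same]
      exact congrArg Prod.fst hx
    · simp [Pi.single_eq_of_ne hj]

variable [Fintype Hh]

theorem bMap_aMap (x : Fin (v i) → ℂ) : Q.bMap s i (Q.aMap s i x) = Q.mu s i *ᵥ x := by
  simp only [bMap, aMap, mu, LinearMap.add_apply, LinearMap.sum_apply, LinearMap.coe_comp,
    Function.comp_apply, LinearMap.fst_apply, LinearMap.snd_apply, LinearMap.prod_apply,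
    Function.prod, mulVecLin_apply, LinearMap.smul_apply, LinearMap.pi_apply,
    LinearMap.proj_apply, LinearEquiv.coe_coe, add_mulVec, sum_mulVec, smul_mulVec]
  rw [add_comm, mulVec_mulVec]
  congr 1
  refine Finset.sum_congr rfl fun h _ => ?_
  rw [reindex_apply, submatrix_mulVec_equiv, ← mulVec_mulVec]
  rfl

theorem bMap_inl (p : Fin (d i) → ℂ) : Q.bMap s i (p, 0) = s.2.1 i *ᵥ p := by
  simp [bMap]

theorem bMap_inr_single [DecidableEq Hh] (h : {h : Hh // Q.tgt h = i})
    (y : Fin (v (Q.src h.1)) → ℂ) :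
    Q.bMap s i (0, (Pi.single h y : (h : {h : Hh // Q.tgt h = i}) → Fin (v (Q.src h.1)) → ℂ)) =
      Q.eps h.1 • vcast (congrArg v h.2) (s.1 h.1 *ᵥ y) := by
  rw [bMap, LinearMap.add_apply, LinearMap.sum_apply, Finset.sum_eq_single h
    (fun h' _ hne => by simp [LinearMap.proj, Pi.single_eq_of_ne hne]) (by simp)]
  simp [LinearMap.proj]

theorem exists_covector_of_not_surjective_bMap (hb : ¬ Function.Surjective (Q.bMap s i)) :
    ∃ w ≠ 0, (∀ h, (Pi.single i w : (j : I) → Fin (v j) → ℂ) (Q.tgt h) ᵥ* s.1 h = 0) ∧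
      ∀ j, (Pi.single i w : (j : I) → Fin (v j) → ℂ) j ᵥ* s.2.1 j = 0 := by
  classical
  obtain ⟨w, hw, hwb⟩ := LinearMap.exists_ne_zero_dotProduct_eq_zero_of_not_surjective hb
  refine ⟨w, hw, fun h => ?_, fun j => ?_⟩
  · by_cases ht : Q.tgt h = i
    · rw [Pi.single_apply_eq_comp_finCongr ht]
      refine dotProduct_eq_zero _ fun y => ?_
      have hy := hwb (0, Pi.single (⟨h, ht⟩ : {h : Hh // Q.tgt h = i}) y)
      rwa [bMap_inr_single, dotProduct_smul, smul_eq_mul, mul_eq_zero,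
        or_iff_right (eps_ne_zero h), vcast_apply, dotProduct_comp_equiv_symm,
        dotProduct_mulVec] at hy
    · simp [Pi.single_eq_of_ne ht]
  · by_cases hj : j = i
    · subst hj
      refine dotProduct_eq_zero _ fun p => ?_
      simpa [← dotProduct_mulVec, bMap_inl] using hwb (p, 0)
    · simp [Pi.single_eq_of_ne hj]

end Maps

theorem coords_add_smul (s₀ s₁ : Q.Rep d v) (t : ℂ) (k : Q.Coord d v) :
    Q.coords (s₀ + t • s₁) k = Q.coords s₀ k + t * Q.coords s₁ k := by
  rcases k with ⟨h, r, c⟩ | ⟨j, r, c⟩ | ⟨j, r, c⟩ <;> rfl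

theorem IsPolyFun.exists_polynomial_eval_add_smul {f : Q.Rep d v → ℂ} (hf : Q.IsPolyFun f)
    (s₀ s₁ : Q.Rep d v) : ∃ q : ℂ[X], ∀ t, f (s₀ + t • s₁) = q.eval t := by
  obtain ⟨P, hP⟩ := hf
  refine ⟨MvPolynomial.aeval (fun k => C (Q.coords s₀ k) + C (Q.coords s₁ k) * X) P, fun t => ?_⟩
  have hline : Q.coords (s₀ + t • s₁) =
      fun k => aeval t (C (Q.coords s₀ k) + C (Q.coords s₁ k) * X) := by
    funext k
    simp [coords_add_smul, mul_comm t]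
  rw [hP, ← MvPolynomial.aeval_eq_eval, hline, ← MvPolynomial.comp_aeval_apply,
    coe_aeval_eq_eval]

theorem not_semistable_of_orbit_line [Fintype I] (m : I → ℤ) (s s₁ : Q.Rep d v) {c : ℤ}
    (hc : c < 0)
    (horb : ∀ u : ℂˣ, ∃ g : GV v, Q.act g s = s + ((u : ℂ) - 1) • s₁ ∧ chi m g = (u : ℂ) ^ c) :
    ¬ Q.Semistable m s := by
  rintro ⟨n, hn, f, hf, hf_equiv, hfs⟩
  obtain ⟨q, hq⟩ := hf.exists_polynomial_eval_add_smul (s - s₁) s₁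
  refine hfs (Polynomial.eq_zero_of_eval_eq_zpow_mul (q := q) (c := c * n) (by nlinarith)
    fun u hu => ?_)
  obtain ⟨g, hgs, hχ⟩ := horb (Units.mk0 u hu)
  rw [← hq, show s - s₁ + u • s₁ = s + (u - 1) • s₁ by module, ← Units.val_mk0 hu, ← hgs,
    hf_equiv, hχ, _root_.zpow_mul, zpow_natCast]

section Action

variable (g : GV v) (s : Q.Rep d v)

theorem act_fst (h : Hh) :
    (Q.act g s).1 h = (g (Q.tgt h) : Matrix (Fin (v (Q.tgt h))) (Fin (v (Q.tgt h))) ℂ) * s.1 h *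
      (↑(g (Q.src h))⁻¹ : Matrix (Fin (v (Q.src h))) (Fin (v (Q.src h))) ℂ) := rfl

-- `act` multiplies the `γ` and `δ` components with the `CStarMatrix` instance; these two
-- lemmas restate them with ordinary matrix multiplication.
theorem act_snd_fst (j : I) :
    (Q.act g s).2.1 j = (g j : Matrix (Fin (v j)) (Fin (v j)) ℂ) * s.2.1 j := rfl

theorem act_snd_snd (j : I) :
    (Q.act g s).2.2 j = s.2.2 j * (↑(g j)⁻¹ : Matrix (Fin (v j)) (Fin (v j)) ℂ) := rfl

end Action

section RankOne

variable [DecidableEq I] {i : I} {x w : Fin (v i) → ℂ}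

def rankOneAt (i : I) (x w : Fin (v i) → ℂ) (j : I) : Matrix (Fin (v j)) (Fin (v j)) ℂ :=
  vecMulVec ((Pi.single i x : (j : I) → Fin (v j) → ℂ) j)
    ((Pi.single i w : (j : I) → Fin (v j) → ℂ) j)

theorem isIdempotentElem_rankOneAt (hwx : w ⬝ᵥ x = 1) (j : I) :
    IsIdempotentElem (rankOneAt i x w j) := by
  by_cases hj : j = i
  · subst hj
    simp [IsIdempotentElem, rankOneAt, vecMulVec_mul_vecMulVec, hwx]
  · simp [IsIdempotentElem, rankOneAt, Pi.single_eq_of_ne hj]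

theorem det_one_add_smul_rankOneAt (hwx : w ⬝ᵥ x = 1) (c : ℂ) (j : I) :
    (1 + c • rankOneAt i x w j).det = if j = i then 1 + c else 1 := by
  by_cases hj : j = i
  · subst hj
    rw [rankOneAt, Pi.single_eq_same, Pi.single_eq_same, ← vecMulVec_smul, vecMulVec_eq Unit,
      det_one_add_replicateCol_mul_replicateRow, smul_dotProduct, hwx]
    simp
  · simp [rankOneAt, hj]

def rankOneUnit (hwx : w ⬝ᵥ x = 1) (u : ℂˣ) : GV v :=
  fun j => (isIdempotentElem_rankOneAt hwx j).scalingUnit u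

theorem chi_rankOneUnit [Fintype I] (m : I → ℤ) (hwx : w ⬝ᵥ x = 1) (u : ℂˣ) :
    chi m (rankOneUnit hwx u) = (u : ℂ) ^ m i := by
  rw [chi, Finset.prod_eq_single i (fun j _ hj => by
      simp [rankOneUnit, IsIdempotentElem.scalingUnit, det_one_add_smul_rankOneAt hwx, hj])
    (by simp)]
  simp [rankOneUnit, IsIdempotentElem.scalingUnit, det_one_add_smul_rankOneAt hwx]

variable [Fintype I]

theorem not_semistable_of_vecMul_eq_zero (m : I → ℤ) (hm : 0 < m i) (s : Q.Rep d v)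
    (hwx : w ⬝ᵥ x = 1)
    (hB : ∀ h, (Pi.single i w : (j : I) → Fin (v j) → ℂ) (Q.tgt h) ᵥ* s.1 h = 0)
    (hγ : ∀ j, (Pi.single i w : (j : I) → Fin (v j) → ℂ) j ᵥ* s.2.1 j = 0) :
    ¬ Q.Semistable m s := by
  have hPB : ∀ h, rankOneAt i x w (Q.tgt h) * s.1 h = 0 := fun h => by
    ext; simp [rankOneAt, vecMulVec_mul, hB, vecMulVec_apply]
  have hPγ : ∀ j, rankOneAt i x w j * s.2.1 j = 0 := fun j => by
    ext; simp [rankOneAt, vecMulVec_mul, hγ, vecMulVec_apply]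
  refine not_semistable_of_orbit_line m s
    ⟨fun h => s.1 h * rankOneAt i x w (Q.src h), 0, fun j => s.2.2 j * rankOneAt i x w j⟩
    (c := -m i) (by omega) fun u => ⟨rankOneUnit hwx u⁻¹, ?_, ?_⟩
  · refine Prod.ext (funext fun h => ?_) (Prod.ext (funext fun j => ?_) (funext fun j => ?_))
    · simp [act_fst, rankOneUnit, IsIdempotentElem.scalingUnit, Matrix.add_mul, Matrix.mul_add,
        Matrix.smul_mul, Matrix.mul_smul, hPB]
    · simp [act_snd_fst, rankOneUnit, IsIdempotentElem.scalingUnit, Matrix.add_mul,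
        Matrix.smul_mul, hPγ]
    · simp [act_snd_snd, rankOneUnit, IsIdempotentElem.scalingUnit, Matrix.mul_add,
        Matrix.mul_smul]
  · rw [chi_rankOneUnit, Units.val_inv_eq_inv_val, _root_.inv_zpow, _root_.zpow_neg]

theorem not_semistable_of_mulVec_eq_zero (m : I → ℤ) (hm : m i < 0) (s : Q.Rep d v)
    (hwx : w ⬝ᵥ x = 1)
    (hB : ∀ h, s.1 h *ᵥ (Pi.single i x : (j : I) → Fin (v j) → ℂ) (Q.src h) = 0)
    (hδ : ∀ j, s.2.2 j *ᵥ (Pi.single i x : (j : I) → Fin (v j) → ℂ) j = 0) :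
    ¬ Q.Semistable m s := by
  have hBP : ∀ h, s.1 h * rankOneAt i x w (Q.src h) = 0 := fun h => by
    rw [rankOneAt, mul_vecMulVec, hB, zero_vecMulVec]
  have hδP : ∀ j, s.2.2 j * rankOneAt i x w j = 0 := fun j => by
    rw [rankOneAt, mul_vecMulVec, hδ, zero_vecMulVec]
  refine not_semistable_of_orbit_line m s
    ⟨fun h => rankOneAt i x w (Q.tgt h) * s.1 h, fun j => rankOneAt i x w j * s.2.1 j, 0⟩
    hm fun u => ⟨rankOneUnit hwx u, ?_, chi_rankOneUnit m hwx u⟩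
  refine Prod.ext (funext fun h => ?_) (Prod.ext (funext fun j => ?_) (funext fun j => ?_))
  · simp [act_fst, rankOneUnit, IsIdempotentElem.scalingUnit, Matrix.add_mul, Matrix.mul_add,
      Matrix.smul_mul, Matrix.mul_smul, Matrix.mul_assoc, hBP]
  · simp [act_snd_fst, rankOneUnit, IsIdempotentElem.scalingUnit, Matrix.add_mul,
      Matrix.smul_mul]
  · simp [act_snd_snd, rankOneUnit, IsIdempotentElem.scalingUnit, Matrix.mul_add,
      Matrix.mul_smul, hδP]

end RankOne

variable [Fintype I] [DecidableEq I] {m : I → ℤ} {s : Q.Rep d v} {i : I}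

theorem injective_aMap_of_semistable (hss : Q.Semistable m s) (hm : m i < 0) :
    Function.Injective (Q.aMap s i) := by
  by_contra ha
  obtain ⟨x, hx, hB, hδ⟩ := exists_vector_of_not_injective_aMap s i ha
  obtain ⟨w, hxw⟩ := exists_dotProduct_eq_one hx
  exact not_semistable_of_mulVec_eq_zero m hm s (dotProduct_comm x w ▸ hxw) hB hδ hss

variable [Fintype Hh]

theorem surjective_bMap_of_semistable (hss : Q.Semistable m s) (hm : 0 < m i) :
    Function.Surjective (Q.bMap s i) := by
  by_contra hb
  obtain ⟨w, hw, hB, hγ⟩ := exists_covector_of_not_surjective_bMap s i hb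
  obtain ⟨x, hwx⟩ := exists_dotProduct_eq_one hw
  exact not_semistable_of_vecMul_eq_zero m hm s hwx hB hγ hss

end QuiverShape

theorem surjective_bMap_injective_aMap_of_semistable_general
    {I Hh : Type} [Fintype I] [DecidableEq I] [Fintype Hh]
    (Q : QuiverShape I Hh) (d v : I → ℕ) (lam : I → ℂ) (m : I → ℤ)
    (s : Q.Rep d v) (hs : s ∈ Q.lamSet lam d v) (hss : Q.Semistable m s) (i : I) :
    (lam i ≠ 0 → Function.Surjective ⇑(Q.bMap s i) ∧ Function.Injective ⇑(Q.aMap s i)) ∧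
    (0 < m i → Function.Surjective ⇑(Q.bMap s i)) ∧
    (m i < 0 → Function.Injective ⇑(Q.aMap s i)) := by
  have hba : ∀ x, Q.bMap s i (Q.aMap s i x) = lam i • x := fun x => by
    rw [QuiverShape.bMap_aMap, hs i, Matrix.smul_mulVec, Matrix.one_mulVec]
  refine ⟨fun hl => ⟨?_, ?_⟩, QuiverShape.surjective_bMap_of_semistable hss,
    QuiverShape.injective_aMap_of_semistable hss⟩
  · exact Function.HasRightInverse.surjective
      ⟨fun y => Q.aMap s i ((lam i)⁻¹ • y), fun y => by simp [hba, hl]⟩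
  · exact Function.HasLeftInverse.injective
      ⟨fun y => (lam i)⁻¹ • Q.bMap s i y, fun x => by simp [hba, hl]⟩

/-- Lemma on mono/epi at semistable points. -/
theorem surjective_bMap_injective_aMap_of_semistable
    {I Hh : Type} [Fintype I] [DecidableEq I] [Fintype Hh] [DecidableEq Hh]
    (Q : QuiverShape I Hh) (d v : I → ℕ) (lam : I → ℂ) (m : I → ℤ)
    (s : Q.Rep d v) (hs : s ∈ Q.lamSet lam d v) (hss : Q.Semistable m s) (i : I) :
    (lam i ≠ 0 → Function.Surjective ⇑(Q.bMap s i) ∧ Function.Injective ⇑(Q.aMap s i)) ∧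
    (0 < m i → Function.Surjective ⇑(Q.bMap s i)) ∧
    (m i < 0 → Function.Injective ⇑(Q.aMap s i)) :=
  surjective_bMap_injective_aMap_of_semistable_general Q d v lam m s hs hss i
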